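/- (Theorem 2, summed form.) Let E be a real inner product space, L > 0, a > 1, and f : E → ℝ a differentiable function whose gradient ∇f is Lipschitz with constant L and which is bounded below: f(x) ≥ f* for all x. Let θ : ℕ → E and g : ℕ → E be sequences with g t ≠ 0 for all t, define α t = 2·|⟪∇f(θ t), g t⟫| / (a·L·‖g t‖²), and suppose each iterate satisfies f(θ (t+1)) ≤ min (f(θ t - α t • g t)) (f(θ t + α t • g t)). Then for every T, the sum over t < T of ⟪∇f(θ t), g t⟫² / ‖g t‖² is at most (a·L / (2·(1 - 1/a))) · (f(θ 0) - f*). -/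

import Mathlib

open scoped InnerProductSpace

open InnerProductSpace in
/-- Descent lemma. -/
lemma descent_lemma
    {E : Type*} [NormedAddCommGroup E] [InnerProductSpace ℝ E] [CompleteSpace E]
    (L : NNReal) (f : E → ℝ) (gradf : E → E)
    (hf : ∀ x, HasGradientAt f (gradf x) x)
    (hLip : LipschitzWith L gradf) (x v : E) :
    f (x + v) ≤ f x + ⟪gradf x, v⟫_ℝ + (L : ℝ) / 2 * ‖v‖ ^ 2 := by
  set c : ℝ := ⟪gradf x, v⟫_ℝ with hc
  set h : ℝ → ℝ := fun s => f (x + s • v) - s * c - (L : ℝ) * ‖v‖ ^ 2 / 2 * s ^ 2 with hh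
  have hderiv : ∀ s : ℝ,
      HasDerivAt h (⟪gradf (x + s • v), v⟫_ℝ - c - (L : ℝ) * ‖v‖ ^ 2 * s) s := by
    intro s
    have hline : HasDerivAt (fun s : ℝ => x + s • v) v s := by
      simpa using ((hasDerivAt_id s).smul_const v).const_add x
    have h1 : HasDerivAt (fun s : ℝ => f (x + s • v)) (⟪gradf (x + s • v), v⟫_ℝ) s := by
      have := ((hf (x + s • v)).hasFDerivAt.comp_hasDerivAt s hline)
      simpa [toDual_apply_apply, Function.comp_def] using this
    have h2 : HasDerivAt (fun s : ℝ => s * c) c s := by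
      simpa using (hasDerivAt_id s).mul_const c
    have h3 : HasDerivAt (fun s : ℝ => (L : ℝ) * ‖v‖ ^ 2 / 2 * s ^ 2)
        ((L : ℝ) * ‖v‖ ^ 2 * s) s := by
      have := (hasDerivAt_pow 2 s).const_mul ((L : ℝ) * ‖v‖ ^ 2 / 2)
      refine this.congr_deriv ?_
      norm_num
      ring
    exact (h1.sub h2).sub h3
  have hanti : AntitoneOn h (Set.Icc (0 : ℝ) 1) := by
    apply antitoneOn_of_deriv_nonpos (convex_Icc 0 1)
    · exact fun s _ => (hderiv s).differentiableAt.continuousAt.continuousWithinAt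
    · intro s _
      exact (hderiv s).differentiableAt.differentiableWithinAt
    · intro s hs
      rw [interior_Icc, Set.mem_Ioo] at hs
      rw [(hderiv s).deriv]
      have hbound : ⟪gradf (x + s • v), v⟫_ℝ - c ≤ (L : ℝ) * ‖v‖ ^ 2 * s := by
        have h1 : ⟪gradf (x + s • v) - gradf x, v⟫_ℝ
            ≤ ‖gradf (x + s • v) - gradf x‖ * ‖v‖ := real_inner_le_norm _ _
        have h2 : ‖gradf (x + s • v) - gradf x‖ ≤ (L : ℝ) * (s * ‖v‖) := by
          have := hLip.dist_le_mul (x + s • v) x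
          simpa [dist_eq_norm, norm_smul, abs_of_pos hs.1] using this
        calc ⟪gradf (x + s • v), v⟫_ℝ - c = ⟪gradf (x + s • v) - gradf x, v⟫_ℝ := by
              rw [inner_sub_left]
          _ ≤ ‖gradf (x + s • v) - gradf x‖ * ‖v‖ := h1
          _ ≤ (L : ℝ) * (s * ‖v‖) * ‖v‖ := by
              apply mul_le_mul_of_nonneg_right h2 (norm_nonneg v)
          _ = (L : ℝ) * ‖v‖ ^ 2 * s := by ring
      linarith
  have := hanti (Set.mem_Icc.2 ⟨le_refl 0, zero_le_one⟩)
    (Set.mem_Icc.2 ⟨zero_le_one, le_refl 1⟩) zero_le_one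
  simp only [hh, zero_smul, add_zero, one_smul, zero_mul, one_pow, mul_one] at this
  ring_nf at this ⊢
  linarith

/-- Theorem 2 (summed form): along iterates `θ t` whose objective value decreases at least as
much as the best of `θ t ± α t • g t` with `α t = 2|⟪∇f(θ t), g t⟫| / (a·L·‖g t‖²)`,
`∑_{t<T} ⟪∇f(θ t), g t⟫² / ‖g t‖² ≤ (a·L / (2·(1 - 1/a))) · (f(θ 0) - f*)`. -/
theorem summed_decrease_bound
    {E : Type*} [NormedAddCommGroup E] [InnerProductSpace ℝ E] [CompleteSpace E]
    (L : NNReal) (hL : 0 < L) (a : ℝ) (ha : 1 < a)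
    (f : E → ℝ) (gradf : E → E)
    (hf : ∀ x, HasGradientAt f (gradf x) x)
    (hLip : LipschitzWith L gradf)
    (fstar : ℝ) (hfstar : ∀ x, fstar ≤ f x)
    (θ : ℕ → E) (g : ℕ → E) (hg : ∀ t, g t ≠ 0)
    (α : ℕ → ℝ) (hα : ∀ t, α t = 2 * |⟪gradf (θ t), g t⟫_ℝ| / (a * (L : ℝ) * ‖g t‖ ^ 2))
    (hstep : ∀ t, f (θ (t + 1)) ≤ min (f (θ t - α t • g t)) (f (θ t + α t • g t)))
    (T : ℕ) :
    ∑ t ∈ Finset.range T, ⟪gradf (θ t), g t⟫_ℝ ^ 2 / ‖g t‖ ^ 2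
      ≤ (a * (L : ℝ) / (2 * (1 - 1 / a))) * (f (θ 0) - fstar) := by
  have hL' : (0 : ℝ) < (L : ℝ) := by exact_mod_cast hL
  have ha0 : (0 : ℝ) < a := lt_trans one_pos ha
  set K : ℝ := 2 * (1 - 1 / a) / (a * (L : ℝ)) with hK
  have hKpos : 0 < K := by
    apply div_pos
    · have : 1 / a < 1 := by
        rw [div_lt_one ha0]; exact ha
      linarith
    · positivity
  -- per-step bound
  have hstep' : ∀ t, f (θ (t + 1)) + K * (⟪gradf (θ t), g t⟫_ℝ ^ 2 / ‖g t‖ ^ 2) ≤ f (θ t) := by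
    intro t
    set c : ℝ := ⟪gradf (θ t), g t⟫_ℝ with hc
    set n : ℝ := ‖g t‖ ^ 2 with hn
    have hnpos : 0 < n := by
      have := norm_pos_iff.mpr (hg t)
      positivity
    have key : f (θ (t + 1)) ≤ f (θ t) - α t * |c| + (L : ℝ) / 2 * (α t) ^ 2 * n := by
      have hαnn : 0 ≤ α t := by
        rw [hα t]; positivity
      rcases le_or_gt 0 c with hcs | hcs
      · have h1 : f (θ (t + 1)) ≤ f (θ t - α t • g t) := le_trans (hstep t) (min_le_left _ _)
        have h2 := descent_lemma L f gradf hf hLip (θ t) (-(α t) • g t)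
        have e1 : θ t + -(α t) • g t = θ t - α t • g t := by
          rw [neg_smul, ← sub_eq_add_neg]
        have e2 : ⟪gradf (θ t), -(α t) • g t⟫_ℝ = -(α t * c) := by
          rw [real_inner_smul_right]; ring
        have e3 : ‖-(α t) • g t‖ ^ 2 = (α t) ^ 2 * n := by
          rw [norm_smul, mul_pow, hn]
          simp [sq_abs]
        rw [e1, e2, e3] at h2
        have : |c| = c := abs_of_nonneg hcs
        rw [this]
        calc f (θ (t + 1)) ≤ f (θ t - α t • g t) := h1
          _ ≤ f (θ t) + -(α t * c) + (L : ℝ) / 2 * ((α t) ^ 2 * n) := h2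
          _ = f (θ t) - α t * c + (L : ℝ) / 2 * (α t) ^ 2 * n := by ring
      · have h1 : f (θ (t + 1)) ≤ f (θ t + α t • g t) := le_trans (hstep t) (min_le_right _ _)
        have h2 := descent_lemma L f gradf hf hLip (θ t) (α t • g t)
        have e2 : ⟪gradf (θ t), α t • g t⟫_ℝ = α t * c := real_inner_smul_right _ _ _
        have e3 : ‖α t • g t‖ ^ 2 = (α t) ^ 2 * n := by
          rw [norm_smul, mul_pow, hn]
          simp [sq_abs]
        rw [e2, e3] at h2
        have : |c| = -c := abs_of_neg hcs
        rw [this]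
        calc f (θ (t + 1)) ≤ f (θ t + α t • g t) := h1
          _ ≤ f (θ t) + α t * c + (L : ℝ) / 2 * ((α t) ^ 2 * n) := h2
          _ = f (θ t) - α t * (-c) + (L : ℝ) / 2 * (α t) ^ 2 * n := by ring
    have harith : - (α t * |c|) + (L : ℝ) / 2 * (α t) ^ 2 * n = -(K * (c ^ 2 / n)) := by
      rw [hα t, hK, ← hn, ← hc]
      have hA2 : c ^ 2 = |c| ^ 2 := (sq_abs c).symm
      rw [hA2]
      have hane : a ≠ 0 := ne_of_gt ha0
      have hLne : (L : ℝ) ≠ 0 := ne_of_gt hL'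
      have hnne : n ≠ 0 := ne_of_gt hnpos
      field_simp
      ring_nf
    have : f (θ t) - α t * |c| + (L : ℝ) / 2 * (α t) ^ 2 * n
        = f (θ t) - K * (c ^ 2 / n) := by linarith [harith]
    rw [this] at key
    linarith
  have telescope : ∀ T : ℕ,
      K * ∑ t ∈ Finset.range T, ⟪gradf (θ t), g t⟫_ℝ ^ 2 / ‖g t‖ ^ 2 ≤ f (θ 0) - f (θ T) := by
    intro T
    induction T with
    | zero => simp
    | succ T ih =>
      rw [Finset.sum_range_succ, mul_add]
      have := hstep' T
      linarith
  have hsum : K * ∑ t ∈ Finset.range T, ⟪gradf (θ t), g t⟫_ℝ ^ 2 / ‖g t‖ ^ 2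
      ≤ f (θ 0) - fstar := le_trans (telescope T) (by linarith [hfstar (θ T)])
  have hfin : ∑ t ∈ Finset.range T, ⟪gradf (θ t), g t⟫_ℝ ^ 2 / ‖g t‖ ^ 2
      ≤ (f (θ 0) - fstar) / K := by
    rw [le_div_iff₀ hKpos]
    linarith [hsum]
  have : (f (θ 0) - fstar) / K = a * (L : ℝ) / (2 * (1 - 1 / a)) * (f (θ 0) - fstar) := by
    rw [hK]
    field_simp
  linarith [hfin, this.le, this.ge]
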